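/- Let θ be a probability density on ℝᵈ with θ(x) > 0 for every x, let Λ̂ : Matrix ι ι ℝ be class-constant, symmetric and positive definite, set q̂(x) := G(x)ᵀ Λ̂ G(x), and suppose ρ̂ := θ/q̂ is again a probability density (∫ ρ̂ = 1) with x ↦ (G x) i * (G x) j * ρ̂(x) Lebesgue integrable for all i j : ι. Let ρ be any probability density with ρ(x) > 0 for a.e. x, with x ↦ (G x) i * (G x) j * ρ(x) integrable for all i j, satisfying the same moment constraints as ρ̂: ∫ (G x) i * (G x) j * ρ(x) dx = ∫ (G x) i * (G x) j * ρ̂(x) dx for all i j : ι. Assume x ↦ θ(x) * Real.log (θ(x)/ρ(x)) and x ↦ θ(x) * Real.log (θ(x)/ρ̂(x)) are integrable. Then ∫ θ * Real.log (θ/ρ̂) ≤ ∫ θ * Real.log (θ/ρ), with equality if and only if ρ = ρ̂ almost everywhere. (This is the optimality and uniqueness content of Theorem 4.7: among all densities matching the power moments up to order 2n, ρ̂ = θ/q(·,Λ̂) uniquely minimizes the Kullback–Leibler distance KL(θ‖ρ).) -/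

import Mathlib

open MeasureTheory

/-- The monomial vector `G(x) = G(x₁) ⊗ ⋯ ⊗ G(x_d)`. -/
noncomputable def Gvec (n d : ℕ) (x : Fin d → ℝ) (i : Fin d → Fin (n + 1)) : ℝ :=
  ∏ t, x t ^ (i t : ℕ)

/-- The quadratic form `q(x, Λ) = G(x)ᵀ Λ G(x)`. -/
noncomputable def quadForm (n d : ℕ)
    (Λ : Matrix (Fin d → Fin (n + 1)) (Fin d → Fin (n + 1)) ℝ)
    (x : Fin d → ℝ) : ℝ :=
  ∑ i, ∑ j, Gvec n d x i * Λ i j * Gvec n d x j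

/-- Class-constant matrices (the paper's parametrization (21)). -/
def ClassConstant (n d : ℕ)
    (Λ : Matrix (Fin d → Fin (n + 1)) (Fin d → Fin (n + 1)) ℝ) : Prop :=
  ∀ i j i' j' : Fin d → Fin (n + 1),
    (∀ t, (i t : ℕ) + (j t : ℕ) = (i' t : ℕ) + (j' t : ℕ)) → Λ i j = Λ i' j'

/-!
The Lagrangian identity behind the theorem: since `θ = q̂ ρ̂`,
`KL(θ‖ρ) - KL(θ‖ρ̂) = ∫ θ log (θ / (q̂ ρ))`, and `q̂ ρ` is again a probability density because
`∫ q̂ ρ = ∑ᵢⱼ Λ̂ᵢⱼ ∫ GᵢGⱼ ρ` only sees the moments of `ρ`, which are those of `ρ̂`, and `q̂ ρ̂ = θ`.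
Gibbs' inequality then shows that the difference is nonnegative and vanishes only when
`θ = q̂ ρ`, i.e. `ρ = ρ̂`, almost everywhere.
-/

open InformationTheory

lemma mul_log_div_sub_sub_eq_mul_klFun (a : ℝ) {b : ℝ} (hb : b ≠ 0) :
    a * Real.log (a / b) - (a - b) = b * klFun (a / b) := by
  rw [klFun_apply]
  field_simp
  ring

section Gibbs

variable {α : Type*} [MeasurableSpace α] {μ : Measure α} {f g : α → ℝ}

lemma integral_mul_log_div_eq_integral_mul_klFun (hg : ∀ᵐ x ∂μ, g x ≠ 0)
    (hfi : Integrable f μ) (hgi : Integrable g μ)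
    (hfg : Integrable (fun x => f x * Real.log (f x / g x)) μ)
    (hmass : ∫ x, f x ∂μ = ∫ x, g x ∂μ) :
    Integrable (fun x => g x * klFun (f x / g x)) μ ∧
      ∫ x, f x * Real.log (f x / g x) ∂μ = ∫ x, g x * klFun (f x / g x) ∂μ := by
  have hkl : (fun x => f x * Real.log (f x / g x) - (f x - g x))
      =ᵐ[μ] fun x => g x * klFun (f x / g x) := by
    filter_upwards [hg] with x hx using mul_log_div_sub_sub_eq_mul_klFun (f x) hx
  have hfgi : Integrable (fun x => f x - g x) μ := hfi.sub hgi
  refine ⟨(hfg.sub hfgi).congr hkl, ?_⟩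
  rw [← integral_congr_ae hkl, integral_sub hfg hfgi, integral_sub hfi hgi, hmass, sub_self,
    sub_zero]

lemma ae_nonneg_mul_klFun_div (hf : ∀ᵐ x ∂μ, 0 ≤ f x) (hg : ∀ᵐ x ∂μ, 0 < g x) :
    0 ≤ᵐ[μ] fun x => g x * klFun (f x / g x) := by
  filter_upwards [hf, hg] with x hfx hgx
  exact mul_nonneg hgx.le (klFun_nonneg (div_nonneg hfx hgx.le))

theorem integral_mul_log_div_nonneg (hf : ∀ᵐ x ∂μ, 0 ≤ f x) (hg : ∀ᵐ x ∂μ, 0 < g x)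
    (hfi : Integrable f μ) (hgi : Integrable g μ)
    (hfg : Integrable (fun x => f x * Real.log (f x / g x)) μ)
    (hmass : ∫ x, f x ∂μ = ∫ x, g x ∂μ) :
    0 ≤ ∫ x, f x * Real.log (f x / g x) ∂μ := by
  rw [(integral_mul_log_div_eq_integral_mul_klFun (hg.mono fun _ hx => hx.ne') hfi hgi hfg
    hmass).2]
  exact integral_nonneg_of_ae (ae_nonneg_mul_klFun_div hf hg)

theorem integral_mul_log_div_eq_zero_iff (hf : ∀ᵐ x ∂μ, 0 ≤ f x) (hg : ∀ᵐ x ∂μ, 0 < g x)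
    (hfi : Integrable f μ) (hgi : Integrable g μ)
    (hfg : Integrable (fun x => f x * Real.log (f x / g x)) μ)
    (hmass : ∫ x, f x ∂μ = ∫ x, g x ∂μ) :
    ∫ x, f x * Real.log (f x / g x) ∂μ = 0 ↔ f =ᵐ[μ] g := by
  obtain ⟨hint, heq⟩ := integral_mul_log_div_eq_integral_mul_klFun
    (hg.mono fun _ hx => hx.ne') hfi hgi hfg hmass
  rw [heq, integral_eq_zero_iff_of_nonneg_ae (ae_nonneg_mul_klFun_div hf hg) hint]
  refine ⟨fun h0 => ?_, fun hfg => ?_⟩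
  · filter_upwards [h0, hf, hg] with x hx hfx hgx
    have hkl : klFun (f x / g x) = 0 := (mul_eq_zero.mp hx).resolve_left hgx.ne'
    exact (div_eq_one_iff_eq hgx.ne').mp ((klFun_eq_zero_iff (div_nonneg hfx hgx.le)).mp hkl)
  · filter_upwards [hfg, hg] with x hx hgx
    simp [hx, div_self hgx.ne', klFun_one]

end Gibbs

section QuadForm

variable {n d : ℕ} {Λ : Matrix (Fin d → Fin (n + 1)) (Fin d → Fin (n + 1)) ℝ}

lemma Gvec_ne_zero (x : Fin d → ℝ) : Gvec n d x ≠ 0 := fun h => by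
  simpa [Gvec] using congrFun h 0

lemma quadForm_pos (hpd : ∀ v : (Fin d → Fin (n + 1)) → ℝ, v ≠ 0 →
      0 < ∑ i, ∑ j, v i * Λ i j * v j) (x : Fin d → ℝ) :
    0 < quadForm n d Λ x :=
  hpd _ (Gvec_ne_zero x)

lemma quadForm_mul_eq_sum (σ : (Fin d → ℝ) → ℝ) :
    (fun x => quadForm n d Λ x * σ x) =
      fun x => ∑ i, ∑ j, Λ i j * (Gvec n d x i * Gvec n d x j * σ x) := by
  funext x
  simp only [quadForm, Finset.sum_mul]
  exact Finset.sum_congr rfl fun i _ => Finset.sum_congr rfl fun j _ => by ring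

variable {μ : Measure (Fin d → ℝ)} {σ : (Fin d → ℝ) → ℝ}

lemma integrable_quadForm_mul
    (hσ : ∀ i j, Integrable (fun x => Gvec n d x i * Gvec n d x j * σ x) μ) :
    Integrable (fun x => quadForm n d Λ x * σ x) μ := by
  rw [quadForm_mul_eq_sum]
  exact integrable_finsetSum _ fun i _ => integrable_finsetSum _ fun j _ => (hσ i j).const_mul _

lemma integral_quadForm_mul
    (hσ : ∀ i j, Integrable (fun x => Gvec n d x i * Gvec n d x j * σ x) μ) :
    ∫ x, quadForm n d Λ x * σ x ∂μ =
      ∑ i, ∑ j, Λ i j * ∫ x, Gvec n d x i * Gvec n d x j * σ x ∂μ := by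
  rw [quadForm_mul_eq_sum]
  refine (integral_finsetSum _ fun i _ =>
    integrable_finsetSum _ fun j _ => (hσ i j).const_mul _).trans ?_
  refine Finset.sum_congr rfl fun i _ => ?_
  refine (integral_finsetSum _ fun j _ => (hσ i j).const_mul _).trans ?_
  exact Finset.sum_congr rfl fun j _ => integral_const_mul _ _

end QuadForm

theorem kl_minimizer_unique_general (n d : ℕ)
    (θ : (Fin d → ℝ) → ℝ) (hθpos : ∀ x, 0 < θ x)
    (hθ1 : ∫ x : Fin d → ℝ, θ x = 1)
    (Λhat : Matrix (Fin d → Fin (n + 1)) (Fin d → Fin (n + 1)) ℝ)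
    (hpd : ∀ v : (Fin d → Fin (n + 1)) → ℝ, v ≠ 0 →
      0 < ∑ i, ∑ j, v i * Λhat i j * v j)
    (ρhat : (Fin d → ℝ) → ℝ)
    (hρhat : ∀ x, ρhat x = θ x / quadForm n d Λhat x)
    (hρhatint : ∀ i j : Fin d → Fin (n + 1),
      Integrable (fun x : Fin d → ℝ => Gvec n d x i * Gvec n d x j * ρhat x))
    (ρ : (Fin d → ℝ) → ℝ)
    (hρpos : ∀ᵐ x : Fin d → ℝ ∂volume, 0 < ρ x)
    (hρint : ∀ i j : Fin d → Fin (n + 1),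
      Integrable (fun x : Fin d → ℝ => Gvec n d x i * Gvec n d x j * ρ x))
    (hmom : ∀ i j : Fin d → Fin (n + 1),
      (∫ x : Fin d → ℝ, Gvec n d x i * Gvec n d x j * ρ x) =
      ∫ x : Fin d → ℝ, Gvec n d x i * Gvec n d x j * ρhat x)
    (h1 : Integrable (fun x : Fin d → ℝ => θ x * Real.log (θ x / ρ x)))
    (h2 : Integrable (fun x : Fin d → ℝ => θ x * Real.log (θ x / ρhat x))) :
    ((∫ x : Fin d → ℝ, θ x * Real.log (θ x / ρhat x))
      ≤ ∫ x : Fin d → ℝ, θ x * Real.log (θ x / ρ x)) ∧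
    (((∫ x : Fin d → ℝ, θ x * Real.log (θ x / ρhat x))
      = ∫ x : Fin d → ℝ, θ x * Real.log (θ x / ρ x)) ↔
      ∀ᵐ x : Fin d → ℝ ∂volume, ρ x = ρhat x) := by
  have hq := quadForm_pos hpd
  have hθ_eq : ∀ x, θ x = quadForm n d Λhat x * ρhat x := fun x => by
    rw [hρhat, mul_div_cancel₀ _ (hq x).ne']
  have hθi : Integrable θ := by
    by_contra h
    rw [integral_undef h] at hθ1
    exact zero_ne_one hθ1
  have hmass : ∫ x, θ x = ∫ x, quadForm n d Λhat x * ρ x := by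
    simp_rw [hθ_eq, integral_quadForm_mul hρint, integral_quadForm_mul hρhatint, hmom]
  have hdiff : (fun x => θ x * Real.log (θ x / ρ x) - θ x * Real.log (θ x / ρhat x))
      =ᵐ[volume] fun x => θ x * Real.log (θ x / (quadForm n d Λhat x * ρ x)) := by
    filter_upwards [hρpos] with x hx
    rw [hρhat, div_div_cancel₀ (hθpos x).ne', mul_comm (quadForm n d Λhat x), ← div_div,
      Real.log_div (div_pos (hθpos x) hx).ne' (hq x).ne', mul_sub]
  have hθ0 : ∀ᵐ x, 0 ≤ θ x := ae_of_all _ fun x => (hθpos x).le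
  have hqρ : ∀ᵐ x, 0 < quadForm n d Λhat x * ρ x := hρpos.mono fun x hx => mul_pos (hq x) hx
  have hKL := (h1.sub h2).congr hdiff
  have hnonneg := integral_mul_log_div_nonneg hθ0 hqρ hθi (integrable_quadForm_mul hρint) hKL hmass
  have hzero := integral_mul_log_div_eq_zero_iff hθ0 hqρ hθi (integrable_quadForm_mul hρint) hKL
    hmass
  rw [← integral_congr_ae hdiff, integral_sub h1 h2] at hnonneg hzero
  have hρ_iff : (θ =ᵐ[volume] fun x => quadForm n d Λhat x * ρ x) ↔ ∀ᵐ x, ρ x = ρhat x :=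
    Filter.eventually_congr (ae_of_all _ fun x => by rw [hθ_eq, mul_right_inj' (hq x).ne', eq_comm])
  exact ⟨sub_nonneg.mp hnonneg, by rw [eq_comm, ← sub_eq_zero, hzero, hρ_iff]⟩

/-- optimality and uniqueness in Theorem 4.7: among all densities
matching the power moments of `ρ̂ = θ/q(·,Λ̂)` up to order 2n, `ρ̂` uniquely
minimizes the Kullback–Leibler distance `KL(θ‖ρ)`. -/
theorem kl_minimizer_unique (n d : ℕ) (hd : 1 ≤ d)
    (θ : (Fin d → ℝ) → ℝ) (hθpos : ∀ x, 0 < θ x) (hθm : Measurable θ)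
    (hθ1 : ∫ x : Fin d → ℝ, θ x = 1)
    (Λhat : Matrix (Fin d → Fin (n + 1)) (Fin d → Fin (n + 1)) ℝ)
    (hcc : ClassConstant n d Λhat) (hsym : Λhat.transpose = Λhat)
    (hpd : ∀ v : (Fin d → Fin (n + 1)) → ℝ, v ≠ 0 →
      0 < ∑ i, ∑ j, v i * Λhat i j * v j)
    (ρhat : (Fin d → ℝ) → ℝ)
    (hρhat : ∀ x, ρhat x = θ x / quadForm n d Λhat x)
    (hρhat1 : ∫ x : Fin d → ℝ, ρhat x = 1)
    (hρhatint : ∀ i j : Fin d → Fin (n + 1),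
      Integrable (fun x : Fin d → ℝ => Gvec n d x i * Gvec n d x j * ρhat x))
    (ρ : (Fin d → ℝ) → ℝ) (hρ0 : ∀ x, 0 ≤ ρ x) (hρm : Measurable ρ)
    (hρpos : ∀ᵐ x : Fin d → ℝ ∂volume, 0 < ρ x)
    (hρ1 : ∫ x : Fin d → ℝ, ρ x = 1)
    (hρint : ∀ i j : Fin d → Fin (n + 1),
      Integrable (fun x : Fin d → ℝ => Gvec n d x i * Gvec n d x j * ρ x))
    (hmom : ∀ i j : Fin d → Fin (n + 1),
      (∫ x : Fin d → ℝ, Gvec n d x i * Gvec n d x j * ρ x) =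
      ∫ x : Fin d → ℝ, Gvec n d x i * Gvec n d x j * ρhat x)
    (h1 : Integrable (fun x : Fin d → ℝ => θ x * Real.log (θ x / ρ x)))
    (h2 : Integrable (fun x : Fin d → ℝ => θ x * Real.log (θ x / ρhat x))) :
    ((∫ x : Fin d → ℝ, θ x * Real.log (θ x / ρhat x))
      ≤ ∫ x : Fin d → ℝ, θ x * Real.log (θ x / ρ x)) ∧
    (((∫ x : Fin d → ℝ, θ x * Real.log (θ x / ρhat x))
      = ∫ x : Fin d → ℝ, θ x * Real.log (θ x / ρ x)) ↔
      ∀ᵐ x : Fin d → ℝ ∂volume, ρ x = ρhat x) :=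
  kl_minimizer_unique_general n d θ hθpos hθ1 Λhat hpd ρhat hρhat hρhatint ρ hρpos hρint hmom h1 h2
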